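/- For every n ≥ 1 there exist polynomials p_n and q_n with integer coefficients such that the n-th derivative of the plasma dispersion function satisfies Z^{(n)}(ζ) = p_n(ζ) + q_n(ζ) Z(ζ) on ℂ \ ℝ, and moreover q_n(ζ) = (-1)^n H_n(ζ), where H_n is the n-th probabilists' Hermite polynomial. -/

import Mathlib

/-!
Differentiating under the integral sign, `√(2π) Z'(ζ) = ∫ e^{-v²/2} / (v - ζ)²`. The derivative
`-e^{-v²/2} - ζ e^{-v²/2} / (v - ζ) - e^{-v²/2} / (v - ζ)²` of `v ↦ e^{-v²/2} / (v - ζ)` integrates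
to zero over `ℝ`, which gives `Z' = -ζZ - 1`. Differentiating `Z⁽ⁿ⁾ = p + qZ` once more then gives
`Z⁽ⁿ⁺¹⁾ = (p' - q) + (q' - Xq)Z`, and `q ↦ q' - Xq` is the recursion `Hₙ₊₁ = XHₙ - Hₙ'` for
`(-1)ⁿHₙ`, starting from `q = 1` at `n = 0`.
-/

open MeasureTheory

/-- The plasma dispersion function `Z(ζ) = (1/√(2π)) ∫_ℝ e^{-v²/2}/(v-ζ) dv`. -/
noncomputable def plasmaZ (ζ : ℂ) : ℂ :=
  (Real.sqrt (2 * Real.pi) : ℂ)⁻¹ *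
    ∫ v : ℝ, Complex.exp (-(v : ℂ) ^ 2 / 2) / ((v : ℂ) - ζ)

open Filter Polynomial Topology

lemma Complex.abs_im_le_norm_ofReal_sub (v : ℝ) (ζ : ℂ) : |ζ.im| ≤ ‖(v : ℂ) - ζ‖ := by
  simpa using Complex.abs_im_le_norm ((v : ℂ) - ζ)

lemma Complex.ofReal_sub_ne_zero (v : ℝ) {ζ : ℂ} (hζ : ζ.im ≠ 0) : (v : ℂ) - ζ ≠ 0 :=
  norm_pos_iff.mp ((abs_pos.mpr hζ).trans_le (abs_im_le_norm_ofReal_sub v ζ))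

lemma MeasureTheory.Integrable.div_ofReal_sub_pow {f : ℝ → ℂ} (hf : Integrable f) {ζ : ℂ}
    (hζ : ζ.im ≠ 0) (m : ℕ) : Integrable (fun v : ℝ => f v / ((v : ℂ) - ζ) ^ m) := by
  refine hf.mul_bdd (c := (|ζ.im| ^ m)⁻¹) (by fun_prop) (Eventually.of_forall fun v => ?_)
  rw [norm_inv, norm_pow]
  gcongr
  exact Complex.abs_im_le_norm_ofReal_sub v ζ

lemma MeasureTheory.Integrable.div_ofReal_sub {f : ℝ → ℂ} (hf : Integrable f) {ζ : ℂ}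
    (hζ : ζ.im ≠ 0) : Integrable (fun v : ℝ => f v / ((v : ℂ) - ζ)) := by
  simpa using hf.div_ofReal_sub_pow hζ 1

lemma hasDerivAt_div_ofReal_sub (w : ℂ) (v : ℝ) {z : ℂ} (hz : (v : ℂ) - z ≠ 0) :
    HasDerivAt (fun z : ℂ => w / ((v : ℂ) - z)) (w / ((v : ℂ) - z) ^ 2) z :=
  ((((hasDerivAt_id z).const_sub (v : ℂ)).inv hz).const_mul w).congr_deriv
    (by simp [div_eq_mul_inv])

lemma hasDerivAt_integral_div_ofReal_sub {f : ℝ → ℂ} (hf : Integrable f) {ζ : ℂ}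
    (hζ : ζ.im ≠ 0) :
    HasDerivAt (fun z : ℂ => ∫ v : ℝ, f v / ((v : ℂ) - z))
      (∫ v : ℝ, f v / ((v : ℂ) - ζ) ^ 2) ζ := by
  -- On the ball of radius `ε = |ζ.im| / 2` around `ζ`, `‖v - z‖ ≥ ε`, which dominates the
  -- `z`-derivative `f v / (v - z)²` by `‖f v‖ / ε²`.
  set ε := |ζ.im| / 2 with hε_def
  have hε : 0 < ε := by have := abs_pos.mpr hζ; positivity
  have hfar : ∀ v : ℝ, ∀ z ∈ Metric.ball ζ ε, ε ≤ ‖(v : ℂ) - z‖ := fun v z hz => by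
    have h1 := Complex.abs_im_le_norm_ofReal_sub v ζ
    have h2 := norm_sub_le_norm_sub_add_norm_sub ((v : ℂ) - ζ) ((v : ℂ) - z) 0
    rw [Metric.mem_ball, dist_eq_norm] at hz
    simp only [sub_sub_sub_cancel_left, sub_zero] at h2
    linarith
  have hne : ∀ v : ℝ, ∀ z ∈ Metric.ball ζ ε, (v : ℂ) - z ≠ 0 := fun v z hz =>
    norm_pos_iff.mp (hε.trans_le (hfar v z hz))
  refine (hasDerivAt_integral_of_dominated_loc_of_deriv_le
    (F := fun z v => f v / ((v : ℂ) - z)) (F' := fun z v => f v / ((v : ℂ) - z) ^ 2)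
    (bound := fun v => ‖f v‖ / ε ^ 2)
    (Metric.ball_mem_nhds ζ hε) ?_ (hf.div_ofReal_sub hζ)
    (hf.div_ofReal_sub_pow hζ 2).aestronglyMeasurable ?_ (hf.norm.div_const _) ?_).2
  · exact Eventually.of_forall fun z => hf.aestronglyMeasurable.mul (by fun_prop)
  · refine Eventually.of_forall fun v z hz => ?_
    rw [norm_div, norm_pow]
    gcongr
    exact hfar v z hz
  · exact Eventually.of_forall fun v z hz => hasDerivAt_div_ofReal_sub (f v) v (hne v z hz)

lemma integrable_cexp_neg_sq_div_two :
    Integrable (fun v : ℝ => Complex.exp (-(v : ℂ) ^ 2 / 2)) :=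
  (integrable_cexp_neg_mul_sq (b := 1 / 2) (by norm_num)).congr
    (Eventually.of_forall fun v => by ring_nf)

lemma integral_cexp_neg_sq_div_two :
    ∫ v : ℝ, Complex.exp (-(v : ℂ) ^ 2 / 2) = Real.sqrt (2 * Real.pi) := by
  have h : ∀ v : ℝ, Complex.exp (-(v : ℂ) ^ 2 / 2) = (Real.exp (-(1 / 2) * v ^ 2) : ℂ) := by
    intro v
    push_cast
    congr 1
    ring
  rw [funext h, integral_complex_ofReal, integral_gaussian]
  norm_num [div_div_eq_mul_div, mul_comm]

lemma hasDerivAt_cexp_neg_sq_div_two_div_ofReal_sub {ζ : ℂ} (hζ : ζ.im ≠ 0) (v : ℝ) :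
    HasDerivAt (fun v : ℝ => Complex.exp (-(v : ℂ) ^ 2 / 2) / ((v : ℂ) - ζ))
      (-Complex.exp (-(v : ℂ) ^ 2 / 2) - ζ * (Complex.exp (-(v : ℂ) ^ 2 / 2) / ((v : ℂ) - ζ))
        - Complex.exp (-(v : ℂ) ^ 2 / 2) / ((v : ℂ) - ζ) ^ 2) v := by
  have hv := Complex.ofReal_sub_ne_zero v hζ
  have hG : HasDerivAt (fun z : ℂ => Complex.exp (-z ^ 2 / 2))
      (Complex.exp (-(v : ℂ) ^ 2 / 2) * -(v : ℂ)) v :=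
    (((hasDerivAt_pow 2 (v : ℂ)).neg.div_const 2).congr_deriv (by ring)).cexp
  refine ((hG.div ((hasDerivAt_id (v : ℂ)).sub_const ζ) hv).comp_ofReal).congr_deriv ?_
  simp only [id]
  field_simp
  ring

lemma integral_cexp_neg_sq_div_two_div_ofReal_sub_sq {ζ : ℂ} (hζ : ζ.im ≠ 0) :
    ∫ v : ℝ, Complex.exp (-(v : ℂ) ^ 2 / 2) / ((v : ℂ) - ζ) ^ 2
      = -Real.sqrt (2 * Real.pi) - ζ * ∫ v : ℝ, Complex.exp (-(v : ℂ) ^ 2 / 2) / ((v : ℂ) - ζ) := by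
  have hG := integrable_cexp_neg_sq_div_two
  have hG₁ : Integrable (fun v : ℝ => ζ * (Complex.exp (-(v : ℂ) ^ 2 / 2) / ((v : ℂ) - ζ))) :=
    (hG.div_ofReal_sub hζ).const_mul ζ
  have hG₂ := hG.div_ofReal_sub_pow hζ 2
  have hG₀ : Integrable (fun v : ℝ => -Complex.exp (-(v : ℂ) ^ 2 / 2)) := hG.neg
  have hG₀₁ : Integrable (fun v : ℝ => -Complex.exp (-(v : ℂ) ^ 2 / 2)
      - ζ * (Complex.exp (-(v : ℂ) ^ 2 / 2) / ((v : ℂ) - ζ))) := hG₀.sub hG₁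
  have h := integral_eq_zero_of_hasDerivAt_of_integrable
    (hasDerivAt_cexp_neg_sq_div_two_div_ofReal_sub hζ) (hG₀₁.sub hG₂) (hG.div_ofReal_sub hζ)
  rw [integral_sub hG₀₁ hG₂, integral_sub hG₀ hG₁, integral_neg, integral_const_mul,
    integral_cexp_neg_sq_div_two] at h
  linear_combination -h

theorem plasmaZ_hasDerivAt {ζ : ℂ} (hζ : ζ.im ≠ 0) :
    HasDerivAt plasmaZ (-ζ * plasmaZ ζ - 1) ζ := by
  have hs : (Real.sqrt (2 * Real.pi) : ℂ) ≠ 0 := by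
    exact_mod_cast (Real.sqrt_pos.mpr (by positivity)).ne'
  refine ((hasDerivAt_integral_div_ofReal_sub integrable_cexp_neg_sq_div_two hζ).const_mul
    _).congr_deriv ?_
  rw [integral_cexp_neg_sq_div_two_div_ofReal_sub_sq hζ, plasmaZ]
  field_simp
  ring

lemma Polynomial.neg_one_pow_mul_hermite_succ (n : ℕ) :
    (-1) ^ (n + 1) * hermite (n + 1)
      = derivative ((-1) ^ n * hermite n) - X * ((-1) ^ n * hermite n) := by
  have hC : (-1 : ℤ[X]) ^ n = C ((-1) ^ n) := by simp
  rw [hermite_succ, hC, derivative_C_mul, ← hC]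
  ring

lemma exists_iteratedDeriv_eq_add_hermite_mul {f : ℂ → ℂ} {U : Set ℂ} (hU : IsOpen U)
    (hf : ∀ z ∈ U, HasDerivAt f (-z * f z - 1) z) (n : ℕ) :
    ∃ p : ℤ[X], ∀ z ∈ U,
      iteratedDeriv n f z = aeval z p + aeval z ((-1) ^ n * hermite n) * f z := by
  induction n with
  | zero => exact ⟨0, fun z _ => by simp⟩
  | succ n ih =>
    obtain ⟨p, hp⟩ := ih
    refine ⟨derivative p - (-1) ^ n * hermite n, fun z hz => ?_⟩
    rw [neg_one_pow_mul_hermite_succ]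
    set q : ℤ[X] := (-1) ^ n * hermite n
    have hderiv : HasDerivAt (fun w => aeval w p + aeval w q * f w)
        (aeval z (derivative p) + (aeval z (derivative q) * f z + aeval z q * (-z * f z - 1))) z :=
      (p.hasDerivAt_aeval z).add ((q.hasDerivAt_aeval z).mul (hf z hz))
    have hloc : iteratedDeriv n f =ᶠ[𝓝 z] fun w => aeval w p + aeval w q * f w :=
      eventually_of_mem (hU.mem_nhds hz) hp
    rw [iteratedDeriv_succ, hloc.deriv_eq, hderiv.deriv]
    simp only [map_sub, map_mul, aeval_X]
    ring

theorem plasmaZ_iteratedDeriv_general (n : ℕ) :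
    ∃ p q : Polynomial ℤ,
      (∀ ζ : ℂ, ζ.im ≠ 0 →
        iteratedDeriv n plasmaZ ζ =
          p.eval₂ (Int.castRingHom ℂ) ζ + q.eval₂ (Int.castRingHom ℂ) ζ * plasmaZ ζ) ∧
      q = (-1) ^ n * Polynomial.hermite n := by
  obtain ⟨p, hp⟩ := exists_iteratedDeriv_eq_add_hermite_mul
    (isOpen_ne_fun Complex.continuous_im continuous_const) (fun z hz => plasmaZ_hasDerivAt hz) n
  exact ⟨p, _, fun ζ hζ => by simpa only [aeval_def, algebraMap_int_eq] using hp ζ hζ, rfl⟩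

/-- For every `n ≥ 1` there are integer polynomials `p_n`, `q_n` with
`Z⁽ⁿ⁾(ζ) = p_n(ζ) + q_n(ζ) Z(ζ)` on `ℂ \ ℝ`, and `q_n = (-1)ⁿ H_n`, `H_n` being the
`n`-th probabilists' Hermite polynomial. -/
theorem plasmaZ_iteratedDeriv (n : ℕ) (hn : 1 ≤ n) :
    ∃ p q : Polynomial ℤ,
      (∀ ζ : ℂ, ζ.im ≠ 0 →
        iteratedDeriv n plasmaZ ζ =
          p.eval₂ (Int.castRingHom ℂ) ζ + q.eval₂ (Int.castRingHom ℂ) ζ * plasmaZ ζ) ∧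
      q = (-1) ^ n * Polynomial.hermite n :=
  plasmaZ_iteratedDeriv_general n
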